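/- Let A be a unital complex *-algebra and let u be a magic unitary for the graph O^-(6,2) over A. Then for all vertices i, j, k, l such that (i,k) is an edge and (j,l) is an edge, one has u_{ij} * u_{kl} = u_{kl} * u_{ij}. -/

import Mathlib

/-- The quadratic form `Q(v) = v₀v₁ + v₂v₃ + v₄² + v₄v₅ + v₅²` on `F₂⁶`. -/
def Q2 (v : Fin 6 → ZMod 2) : ZMod 2 :=
  v 0 * v 1 + v 2 * v 3 + v 4 ^ 2 + v 4 * v 5 + v 5 ^ 2

/-- The vertex set of `O⁻(6,2)`: nonzero vectors of `F₂⁶` with `Q(v) = 0`. -/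
def OVert2 : Type := {v : Fin 6 → ZMod 2 // v ≠ 0 ∧ Q2 v = 0}

instance : Fintype OVert2 :=
  inferInstanceAs (Fintype {v : Fin 6 → ZMod 2 // v ≠ 0 ∧ Q2 v = 0})

/-- The graph `O⁻(6,2)`: two distinct singular nonzero vectors `v, w` are adjacent iff
`Q(v + w) = 0`. -/
def OMinus62 : SimpleGraph OVert2 where
  Adj v w := v ≠ w ∧ Q2 (v.1 + w.1) = 0
  symm := by
    constructor
    rintro v w ⟨h1, h2⟩
    exact ⟨h1.symm, by rwa [add_comm w.1 v.1]⟩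
  loopless := ⟨fun v h => h.1 rfl⟩

/-- A magic unitary for a finite simple graph `X` over a unital complex `*`-algebra `A`:
a family `u i j` of self-adjoint idempotents whose rows and columns are orthogonal and
sum to `1`, with `u i j * u k l = 0` whenever exactly one of `(i,k)`, `(j,l)` is an edge. -/
structure IsMagicUnitary {V : Type*} [Fintype V] (X : SimpleGraph V) (A : Type*)
    [Ring A] [StarRing A] [Algebra ℂ A] (u : V → V → A) : Prop where
  star_self : ∀ i j, star (u i j) = u i j
  idem : ∀ i j, u i j * u i j = u i j
  row_orth : ∀ i j k, j ≠ k → u i j * u i k = 0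
  col_orth : ∀ i j k, j ≠ k → u j i * u k i = 0
  row_sum : ∀ i, ∑ k, u i k = 1
  col_sum : ∀ i, ∑ k, u k i = 1
  adj_mul_eq_zero : ∀ i j k l, X.Adj i k → ¬X.Adj j l → u i j * u k l = 0
  adj_mul_eq_zero' : ∀ i j k l, ¬X.Adj i k → X.Adj j l → u i j * u k l = 0

instance : DecidableEq OVert2 :=
  inferInstanceAs (DecidableEq {v : Fin 6 → ZMod 2 // v ≠ 0 ∧ Q2 v = 0})

lemma vec_add_self (x : Fin 6 → ZMod 2) : x + x = 0 := by
  funext t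
  show x t + x t = 0
  have h2 : (2 : ZMod 2) = 0 := rfl
  calc x t + x t = 2 * x t := by ring
  _ = 0 := by rw [h2, zero_mul]

lemma vec_cancel {x y : Fin 6 → ZMod 2} : x + (x + y) = y := by
  rw [← add_assoc, vec_add_self, zero_add]

lemma eq_of_add_eq_zero {x y : Fin 6 → ZMod 2} (h : x + y = 0) : x = y := by
  have h2 : x + (x + y) = y := vec_cancel
  rwa [h, add_zero] at h2

lemma cancel_add_left {x y : Fin 6 → ZMod 2} (h : x + y = x) : y = 0 := by
  have h2 := congrArg (fun t => x + t) h
  simpa [vec_cancel, vec_add_self] using h2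

lemma cancel_add_right {x y : Fin 6 → ZMod 2} (h : x + y = y) : x = 0 := by
  have h2 : x + y + y = y + y := congrArg (fun t => t + y) h
  rwa [add_assoc, vec_add_self, add_zero] at h2

set_option synthInstance.maxHeartbeats 1000000 in
set_option synthInstance.maxSize 3000 in
set_option maxHeartbeats 10000000 in
lemma uniqueCN' : ∀ x y z : OVert2, Q2 (x.1 + y.1) = 0 → x ≠ y →
    Q2 (z.1 + x.1) = 0 → z ≠ x → Q2 (z.1 + y.1) = 0 → z ≠ y → z.1 = x.1 + y.1 := by
  decide

/-- The unique common neighbour of an edge of `O⁻(6,2)` is the sum of its endpoints. -/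
lemma uniqueCN {x y z : OVert2} (hxy : OMinus62.Adj x y) (hzx : OMinus62.Adj z x)
    (hzy : OMinus62.Adj z y) : z.1 = x.1 + y.1 :=
  uniqueCN' x y z hxy.2 hxy.1 hzx.2 hzx.1 hzy.2 hzy.1

/-- The third point of the line through an edge, as a vertex. -/
def third (v w : OVert2) (h : OMinus62.Adj v w) : OVert2 :=
  ⟨v.1 + w.1, fun h0 => h.1 (Subtype.ext (eq_of_add_eq_zero h0)), h.2⟩

lemma third_val (v w : OVert2) (h : OMinus62.Adj v w) : (third v w h).1 = v.1 + w.1 := rfl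

lemma adj_third_left (v w : OVert2) (h : OMinus62.Adj v w) :
    OMinus62.Adj v (third v w h) := by
  constructor
  · intro he
    have h1 : v.1 = v.1 + w.1 := congrArg Subtype.val he
    exact w.2.1 (cancel_add_left h1.symm)
  · show Q2 (v.1 + (v.1 + w.1)) = 0
    rw [vec_cancel]; exact w.2.2

lemma adj_third_right (v w : OVert2) (h : OMinus62.Adj v w) :
    OMinus62.Adj w (third v w h) := by
  have h2 : third v w h = third w v h.symm := Subtype.ext (add_comm v.1 w.1)
  rw [h2]; exact adj_third_left w v h.symm

section Main
variable {A : Type*} [Ring A] [StarRing A] [Algebra ℂ A]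

/-- Row insertion with a unique survivor. -/
lemma ins_row (u : OVert2 → OVert2 → A) (hu : IsMagicUnitary OMinus62 A u)
    (a c e x z s : OVert2)
    (h : ∀ y : OVert2, y ≠ s → u a x * u c y = 0 ∨ u c y * u e z = 0) :
    u a x * u e z = u a x * u c s * u e z := by
  have h1 : u a x * u e z = ∑ y : OVert2, u a x * u c y * u e z := by
    calc u a x * u e z = u a x * (∑ y : OVert2, u c y) * u e z := by
          rw [hu.row_sum c, mul_one]
      _ = ∑ y : OVert2, u a x * u c y * u e z := by rw [Finset.mul_sum, Finset.sum_mul]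
  have h2 : ∑ y : OVert2, u a x * u c y * u e z = u a x * u c s * u e z := by
    refine Finset.sum_eq_single s (fun y _ hy => ?_) (fun hs => absurd (Finset.mem_univ s) hs)
    rcases h y hy with h0 | h0
    · rw [h0, zero_mul]
    · rw [mul_assoc, h0, mul_zero]
  exact h1.trans h2

/-- Column insertion with a unique survivor. -/
lemma ins_col (u : OVert2 → OVert2 → A) (hu : IsMagicUnitary OMinus62 A u)
    (a e x z c s : OVert2)
    (h : ∀ w : OVert2, w ≠ s → u a x * u w c = 0 ∨ u w c * u e z = 0) :
    u a x * u e z = u a x * u s c * u e z := by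
  have h1 : u a x * u e z = ∑ w : OVert2, u a x * u w c * u e z := by
    calc u a x * u e z = u a x * (∑ w : OVert2, u w c) * u e z := by
          rw [hu.col_sum c, mul_one]
      _ = ∑ w : OVert2, u a x * u w c * u e z := by rw [Finset.mul_sum, Finset.sum_mul]
  have h2 : ∑ w : OVert2, u a x * u w c * u e z = u a x * u s c * u e z := by
    refine Finset.sum_eq_single s (fun w _ hw => ?_) (fun hs => absurd (Finset.mem_univ s) hs)
    rcases h w hw with h0 | h0
    · rw [h0, zero_mul]
    · rw [mul_assoc, h0, mul_zero]
  exact h1.trans h2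

end Main

/-- For a magic unitary of `O⁻(6,2)`, entries `u_{ij}` and `u_{kl}` commute whenever
`(i,k)` and `(j,l)` are both edges. -/
theorem magic_unitary_comm_of_adj {A : Type*} [Ring A] [StarRing A] [Algebra ℂ A]
    (u : OVert2 → OVert2 → A) (hu : IsMagicUnitary OMinus62 A u)
    (i j k l : OVert2) (hik : OMinus62.Adj i k) (hjl : OMinus62.Adj j l) :
    u i j * u k l = u k l * u i j := by
  classical
  set m := third i k hik with hm
  set n := third j l hjl with hn
  have him : OMinus62.Adj i m := adj_third_left i k hik
  have hkm : OMinus62.Adj k m := adj_third_right i k hik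
  have hjn : OMinus62.Adj j n := adj_third_left j l hjl
  have hln : OMinus62.Adj l n := adj_third_right j l hjl
  have hmk : m.1 + i.1 = k.1 := by
    rw [hm, third_val, add_comm i.1 k.1, add_assoc, vec_add_self, add_zero]
  have hnl : j.1 + n.1 = l.1 := by rw [hn, third_val, vec_cancel]
  have hln' : l.1 + n.1 = j.1 := by
    rw [hn, third_val, add_comm j.1 l.1, vec_cancel]
  have hjn' : j ≠ n := by
    intro he
    apply l.2.1
    rw [← hnl, he, vec_add_self]
  have hnl' : n ≠ l := by
    intro he
    apply j.2.1
    have h1 : j.1 + n.1 = l.1 := hnl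
    rw [he] at h1
    exact cancel_add_right h1
  -- Step 1: u i j * (u k l * u i n) = 0
  have step1 : u i j * (u k l * u i n) = 0 := by
    have hins : u i j * u i n = u i j * u k l * u i n := by
      refine ins_row u hu i k i j n l (fun y hy => ?_)
      by_cases hyj : y = j
      · exact Or.inl (by rw [hyj]; exact hu.col_orth j i k (fun he => hik.1 he))
      by_cases hyn : y = n
      · exact Or.inr (by rw [hyn]; exact hu.col_orth n k i (fun he => hik.1 he.symm))
      by_cases hadj : OMinus62.Adj j y
      · by_cases hadj2 : OMinus62.Adj y n
        · exact absurd (Subtype.ext ((uniqueCN hjn hadj.symm hadj2).trans hnl)) hy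
        · exact Or.inr (hu.adj_mul_eq_zero k y i n hik.symm hadj2)
      · exact Or.inl (hu.adj_mul_eq_zero i j k y hik hadj)
    have h0 : u i j * u i n = 0 := hu.row_orth i j n hjn'
    rw [← mul_assoc, ← hins, h0]
  -- Step 2 (absorption): u i j * u k l = u i j * u m n * u k l
  have step2 : u i j * u k l = u i j * u m n * u k l := by
    refine ins_row u hu i m k j l n (fun y hy => ?_)
    by_cases hyj : y = j
    · exact Or.inl (by rw [hyj]; exact hu.col_orth j i m (fun he => him.1 he))
    by_cases hyl : y = l
    · exact Or.inr (by rw [hyl]; exact hu.col_orth l m k (fun he => hkm.1 he.symm))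
    by_cases hadj : OMinus62.Adj j y
    · by_cases hadj2 : OMinus62.Adj y l
      · refine absurd (Subtype.ext ((uniqueCN hjl hadj.symm hadj2).trans ?_)) hy
        rw [hn, third_val]
      · exact Or.inr (hu.adj_mul_eq_zero m y k l hkm.symm hadj2)
    · exact Or.inl (hu.adj_mul_eq_zero i j m y him hadj)
  -- Step 3: for b with Adj l b and ¬ Adj n b : u m n * (u k l * u i b) = 0
  have step3 : ∀ b : OVert2, OMinus62.Adj l b → ¬OMinus62.Adj n b →
      u m n * (u k l * u i b) = 0 := by
    intro b hlb hnb
    have hins : u m n * u i b = u m n * u k l * u i b := by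
      refine ins_col u hu m i n b l k (fun w hw => ?_)
      by_cases hwm : w = m
      · exact Or.inl (by rw [hwm]; exact hu.row_orth m n l hnl')
      by_cases hwi : w = i
      · exact Or.inr (by rw [hwi]; exact hu.row_orth i l b (fun he => hlb.1 he))
      by_cases hadj : OMinus62.Adj m w
      · by_cases hadj2 : OMinus62.Adj w i
        · exact absurd (Subtype.ext ((uniqueCN him.symm hadj.symm hadj2).trans hmk)) hw
        · exact Or.inr (hu.adj_mul_eq_zero' w l i b hadj2 hlb)
      · exact Or.inl (hu.adj_mul_eq_zero' m n w l hadj hln.symm)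
    have h0 : u m n * u i b = 0 := hu.adj_mul_eq_zero m n i b him.symm hnb
    rw [← mul_assoc, ← hins, h0]
  -- Step 4: u i j * u k l = (u i j * u k l) * u i j
  have key : u i j * u k l = u i j * u k l * u i j := by
    have h1 : u i j * u k l = ∑ b : OVert2, u i j * u k l * u i b := by
      calc u i j * u k l = u i j * u k l * (∑ b : OVert2, u i b) := by
            rw [hu.row_sum i, mul_one]
        _ = ∑ b : OVert2, u i j * u k l * u i b := by rw [Finset.mul_sum]
    have h2 : ∑ b : OVert2, u i j * u k l * u i b = u i j * u k l * u i j := by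
      refine Finset.sum_eq_single j (fun b _ hbj => ?_)
        (fun hs => absurd (Finset.mem_univ j) hs)
      by_cases hlb : OMinus62.Adj l b
      · by_cases hbn : b = n
        · rw [hbn, mul_assoc]; exact step1
        · have hnb : ¬OMinus62.Adj n b := by
            intro hnb
            exact hbj (Subtype.ext ((uniqueCN hln hlb.symm hnb.symm).trans hln'))
          rw [step2, mul_assoc, mul_assoc, step3 b hlb hnb, mul_zero]
      · by_cases hbl : b = l
        · rw [mul_assoc, hbl, hu.col_orth l k i (fun he => hik.1 he.symm), mul_zero]
        · rw [mul_assoc, hu.adj_mul_eq_zero k l i b hik.symm hlb, mul_zero]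
    exact h1.trans h2
  -- Step 5: conclude by self-adjointness
  have hstar : star (u i j * u k l) = u k l * u i j := by
    rw [star_mul, hu.star_self, hu.star_self]
  have e3 : star (u i j * u k l * u i j) = u i j * (u k l * u i j) := by
    rw [star_mul, hu.star_self, hstar]
  calc u i j * u k l = u i j * u k l * u i j := key
    _ = u i j * (u k l * u i j) := mul_assoc _ _ _
    _ = star (u i j * u k l * u i j) := e3.symm
    _ = star (u i j * u k l) := by rw [← key]
    _ = u k l * u i j := hstar
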